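/- Let n ≥ 3 be odd, k ≥ 1, E ⊆ ℤ_n^d. For y¹,...,y^k ∈ E and t₁,...,t_k ∈ ℤ_n, let μ(t₁,...,t_k) = |{x ∈ E : x·yⁱ = t_i for all i}|. Then ∑_{y¹,...,y^k ∈ E} ∑_{t₁,...,t_k} μ² ≪ |E|^{k+2}/n^k + τ(n)·n^{2d−1}·|E|^k / γ(n)^{d−1}, with implied constant depending only on k. -/

import Mathlib

open Finset

noncomputable def chi (n : ℕ) (t : ZMod n) : ℂ :=
  Complex.exp (2 * Real.pi * Complex.I * (t.val : ℂ) / (n : ℂ))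

def dot {n d : ℕ} (x y : Fin d → ZMod n) : ZMod n := ∑ i, x i * y i

def nrm {n d : ℕ} (z : Fin d → ZMod n) : ZMod n := ∑ i, z i ^ 2

noncomputable def ft (n d : ℕ) [NeZero n] (f : (Fin d → ZMod n) → ℂ)
    (m : Fin d → ZMod n) : ℂ :=
  (n : ℂ)⁻¹ ^ d * ∑ x : Fin d → ZMod n, f x * chi n (-(dot x m))

section basic
variable {n : ℕ} [NeZero n]

lemma chi_eq (t : ZMod n) : chi n t = ZMod.stdAddChar t := by
  rw [ZMod.stdAddChar_apply, ZMod.toCircle_apply, chi]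

lemma chi_conj (t : ZMod n) : (starRingEnd ℂ) (chi n t) = chi n (-t) := by
  rw [chi_eq, chi_eq, ZMod.stdAddChar_apply, ZMod.stdAddChar_apply,
    ← Circle.coe_inv_eq_conj, ← AddChar.map_neg_eq_inv]

lemma chi_sum {ι : Type*} (s : Finset ι) (f : ι → ZMod n) :
    chi n (∑ i ∈ s, f i) = ∏ i ∈ s, chi n (f i) := by
  classical
  induction s using Finset.cons_induction with
  | empty => simp [chi_eq]
  | cons a s ha ih => rw [Finset.sum_cons, Finset.prod_cons, ← ih, chi_eq, chi_eq, chi_eq,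
      AddChar.map_add_eq_mul]

lemma chi_orth (u : ZMod n) : ∑ c : ZMod n, chi n (c * u) = if u = 0 then (n : ℂ) else 0 := by
  simp only [chi_eq]
  have := fun c : ZMod n => mul_comm c u
  split_ifs with h
  · simp [h, ZMod.card]
  · have : ∑ c : ZMod n, ZMod.stdAddChar (u * c) = 0 :=
      AddChar.sum_eq_zero_of_ne_one (ZMod.isPrimitive_stdAddChar n h)
    rw [← this]
    exact Fintype.sum_congr _ _ fun c => by rw [mul_comm]

lemma chi_add (a b : ZMod n) : chi n (a + b) = chi n a * chi n b := by
  rw [chi_eq, chi_eq, chi_eq, AddChar.map_add_eq_mul]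

lemma sum_pi_prod {ι : Type*} [Fintype ι] [DecidableEq ι] (h : ι → ZMod n → ℂ) :
    ∑ m : ι → ZMod n, ∏ i, h i (m i) = ∏ i, ∑ u : ZMod n, h i u := by
  classical
  rw [← Finset.sum_prod_piFinset Finset.univ h, Fintype.piFinset_univ]

lemma chi_orth_pi {ι : Type*} [Fintype ι] [DecidableEq ι] (u : ι → ZMod n) :
    ∑ c : ι → ZMod n, ∏ i, chi n (c i * u i)
      = if ∀ i, u i = 0 then ((n : ℂ) ^ Fintype.card ι) else 0 := by
  rw [sum_pi_prod fun i v => chi n (v * u i)]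
  have h1 : ∀ i, (∑ v : ZMod n, chi n (v * u i)) = if u i = 0 then (n : ℂ) else 0 :=
    fun i => chi_orth (u i)
  rw [Finset.prod_congr rfl fun i _ => h1 i]
  by_cases h : ∀ i, u i = 0
  · simp [h, Finset.prod_const]
  · push_neg at h
    obtain ⟨i, hi⟩ := h
    rw [if_neg (by push_neg; exact ⟨i, hi⟩)]
    exact Finset.prod_eq_zero (Finset.mem_univ i) (by simp [hi])

end basic

noncomputable def Ff (n d : ℕ) [NeZero n] (E : Finset (Fin d → ZMod n))
    (m : Fin d → ZMod n) : ℂ := ∑ x ∈ E, chi n (dot x m)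

section main
variable {n d : ℕ} [NeZero n]

lemma dot_sub_left (x x' m : Fin d → ZMod n) : dot (x - x') m = dot x m - dot x' m := by
  simp [dot, sub_mul, Finset.sum_sub_distrib]

lemma sum_chi_dot (z : Fin d → ZMod n) :
    ∑ m : Fin d → ZMod n, chi n (dot z m) = if z = 0 then ((n : ℂ) ^ d) else 0 := by
  have h1 : ∀ m : Fin d → ZMod n, chi n (dot z m) = ∏ i, chi n (m i * z i) := by
    intro m
    rw [dot, chi_sum]
    exact Finset.prod_congr rfl fun i _ => by rw [mul_comm]
  rw [Fintype.sum_congr _ _ h1, chi_orth_pi z]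
  have : (∀ i, z i = 0) ↔ z = 0 := by
    constructor
    · intro h; funext i; exact h i
    · intro h i; rw [h]; rfl
  simp [this, Fintype.card_fin]

lemma parseval (E : Finset (Fin d → ZMod n)) :
    ∑ m : Fin d → ZMod n, Ff n d E m * (starRingEnd ℂ) (Ff n d E m)
      = (n : ℂ) ^ d * E.card := by
  classical
  have expand : ∀ m : Fin d → ZMod n, Ff n d E m * (starRingEnd ℂ) (Ff n d E m)
      = ∑ x ∈ E, ∑ x' ∈ E, chi n (dot (x - x') m) := by
    intro m
    rw [Ff, map_sum, Finset.sum_mul_sum]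
    refine Finset.sum_congr rfl fun x _ => Finset.sum_congr rfl fun x' _ => ?_
    rw [chi_conj, ← chi_add, dot_sub_left, sub_eq_add_neg]
  rw [Fintype.sum_congr _ _ expand, Finset.sum_comm]
  have inner : ∀ x ∈ E, (∑ m : Fin d → ZMod n, ∑ x' ∈ E, chi n (dot (x - x') m))
      = (n : ℂ) ^ d := by
    intro x hx
    rw [Finset.sum_comm]
    have h2 : ∀ x' ∈ E, (∑ m : Fin d → ZMod n, chi n (dot (x - x') m))
        = if x = x' then ((n : ℂ) ^ d) else 0 := by
      intro x' _
      rw [sum_chi_dot (x - x')]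
      congr 1
      simp [sub_eq_zero]
    rw [Finset.sum_congr rfl h2, Finset.sum_ite_eq E x fun _ => (n : ℂ) ^ d, if_pos hx]
  rw [Finset.sum_congr rfl inner, Finset.sum_const, nsmul_eq_mul, mul_comm]

lemma card_mulker_le (a : ZMod n) :
    (Finset.univ.filter fun u : ZMod n => a * u = 0).card ≤ Nat.gcd a.val n := by
  classical
  set g := Nat.gcd a.val n with hgdef
  have hn : 0 < n := Nat.pos_of_ne_zero (NeZero.ne n)
  have hg : 0 < g := Nat.gcd_pos_of_pos_right _ hn
  have hgd : g ∣ n := Nat.gcd_dvd_right _ _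
  set n' := n / g with hn'def
  have hn'g : n' * g = n := Nat.div_mul_cancel hgd
  have hn' : 0 < n' := Nat.div_pos (Nat.le_of_dvd hn hgd) hg
  have hdvd : ∀ u : ZMod n, a * u = 0 → n' ∣ u.val := by
    intro u hu
    have h1 : ((a.val * u.val : ℕ) : ZMod n) = 0 := by
      push_cast [ZMod.natCast_zmod_val]; exact hu
    have h2 : n ∣ a.val * u.val := (ZMod.natCast_eq_zero_iff _ _).mp h1
    have hga : g ∣ a.val := Nat.gcd_dvd_left _ _
    have h3 : g * n' ∣ g * ((a.val / g) * u.val) := by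
      rw [← Nat.mul_assoc, Nat.mul_div_cancel' hga, mul_comm g n', hn'g]
      exact h2
    have h4 : n' ∣ (a.val / g) * u.val := (mul_dvd_mul_iff_left hg.ne').mp h3
    have hco : Nat.Coprime n' (a.val / g) := (Nat.coprime_div_gcd_div_gcd hg).symm
    exact hco.dvd_of_dvd_mul_left h4
  refine le_trans (Finset.card_le_card_of_injOn (t := Finset.range g)
    (fun u : ZMod n => u.val / n') ?_ ?_) (le_of_eq (Finset.card_range g))
  · intro u hu
    simp only [Finset.mem_coe, Finset.mem_range]
    have : u.val < n := u.val_lt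
    rw [Nat.div_lt_iff_lt_mul hn']
    have hgn : g * n' = n := by rw [mul_comm]; exact hn'g
    omega
  · intro u hu v hv huv
    simp only [Finset.mem_coe, Finset.mem_filter] at hu hv
    have h1 : n' ∣ u.val := hdvd u hu.2
    have h2 : n' ∣ v.val := hdvd v hv.2
    apply ZMod.val_injective
    have e1 : u.val = n' * (u.val / n') := (Nat.mul_div_cancel' h1).symm
    have e2 : v.val = n' * (v.val / n') := (Nat.mul_div_cancel' h2).symm
    rw [e1, e2]
    exact congrArg (fun q => n' * q) huv

lemma sum_shift_le (a : ZMod n) (w : Fin d → ZMod n) (ψ : (Fin d → ZMod n) → ℝ)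
    (hψ : ∀ m, 0 ≤ ψ m) :
    ∑ y : Fin d → ZMod n, ψ (a • y + w)
      ≤ (Nat.gcd a.val n : ℝ) ^ d * ∑ m : Fin d → ZMod n, ψ m := by
  classical
  set g := Nat.gcd a.val n with hgdef
  have fiber : ∀ b : Fin d → ZMod n,
      (Finset.univ.filter fun y : Fin d → ZMod n => a • y + w = b).card ≤ g ^ d := by
    intro b
    by_cases hne : (Finset.univ.filter fun y : Fin d → ZMod n => a • y + w = b).Nonempty
    · obtain ⟨y₀, hy₀⟩ := hne
      simp only [Finset.mem_filter] at hy₀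
      refine le_trans (Finset.card_le_card_of_injOn
        (t := Fintype.piFinset fun _ : Fin d =>
          Finset.univ.filter fun u : ZMod n => a * u = 0)
        (fun y : Fin d → ZMod n => y - y₀) ?_ ?_) ?_
      rotate_left 2
      · rw [Fintype.card_piFinset]
        calc ∏ _i : Fin d, (Finset.univ.filter fun u : ZMod n => a * u = 0).card
            ≤ ∏ _i : Fin d, g := Finset.prod_le_prod (fun _ _ => Nat.zero_le _)
              (fun _ _ => card_mulker_le a)
          _ = g ^ d := by rw [Finset.prod_const, Finset.card_univ, Fintype.card_fin]
      · intro y hy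
        simp only [Finset.mem_coe, Finset.mem_filter] at hy
        rw [Finset.mem_coe, Fintype.mem_piFinset]
        intro i
        simp only [Finset.mem_filter, Finset.mem_univ, true_and]
        have : a • y = a • y₀ := by
          have := hy.2.trans hy₀.2.symm
          have h := add_right_cancel this
          exact h
        have := congrFun this i
        simp only [Pi.smul_apply, smul_eq_mul] at this
        rw [Pi.sub_apply, mul_sub, this, sub_self]
      · intro u _ v _ huv
        exact sub_left_injective huv
    · rw [Finset.not_nonempty_iff_eq_empty] at hne
      simp [hne]
  calc ∑ y : Fin d → ZMod n, ψ (a • y + w)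
      = ∑ b ∈ Finset.univ.image (fun y : Fin d → ZMod n => a • y + w),
          (Finset.univ.filter fun y : Fin d → ZMod n => a • y + w = b).card • ψ b := by
        rw [Finset.sum_comp]
    _ ≤ ∑ b ∈ Finset.univ.image (fun y : Fin d → ZMod n => a • y + w),
          (g : ℝ) ^ d * ψ b := by
        refine Finset.sum_le_sum fun b _ => ?_
        rw [nsmul_eq_mul]
        have : ((Finset.univ.filter fun y : Fin d → ZMod n => a • y + w = b).card : ℝ)
            ≤ (g : ℝ) ^ d := by
          exact_mod_cast Nat.cast_le.mpr ((fiber b).trans_eq (by norm_cast))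
        exact mul_le_mul_of_nonneg_right this (hψ b)
    _ ≤ ∑ b : Fin d → ZMod n, (g : ℝ) ^ d * ψ b := by
        refine Finset.sum_le_sum_of_subset_of_nonneg (Finset.subset_univ _) ?_
        intro b _ _
        exact mul_nonneg (by positivity) (hψ b)
    _ = (g : ℝ) ^ d * ∑ m : Fin d → ZMod n, ψ m := by rw [Finset.mul_sum]

lemma sum_gcd_pow_le (hd : 1 ≤ d) (hn : 2 ≤ n) :
    ∑ a ∈ Finset.univ.erase (0 : ZMod n), (Nat.gcd a.val n : ℝ) ^ d
      ≤ (n.divisors.card : ℝ) * n * ((n : ℝ) / (n.minFac : ℝ)) ^ (d - 1) := by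
  classical
  have hnpos : 0 < n := by omega
  have hminpos : 0 < n.minFac := Nat.minFac_pos n
  set A := Finset.univ.erase (0 : ZMod n) with hA
  set G := fun a : ZMod n => Nat.gcd a.val n with hG
  have himg : A.image G ⊆ n.divisors := by
    intro s hs
    obtain ⟨a, _, rfl⟩ := Finset.mem_image.mp hs
    exact Nat.mem_divisors.mpr ⟨Nat.gcd_dvd_right _ _, hnpos.ne'⟩
  have key : ∀ s ∈ A.image G,
      ((A.filter fun a => G a = s).card : ℝ) * (s : ℝ) ^ d
        ≤ (n : ℝ) * ((n : ℝ) / (n.minFac : ℝ)) ^ (d - 1) := by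
    intro s hs
    obtain ⟨a, ha, rfl⟩ := Finset.mem_image.mp hs
    set s := G a
    have hane : a ≠ 0 := (Finset.mem_erase.mp ha).1
    have haval : a.val ≠ 0 := fun h => hane (ZMod.val_injective n (by simpa using h))
    have hsdvd : s ∣ n := Nat.gcd_dvd_right _ _
    have hspos : 0 < s := Nat.gcd_pos_of_pos_right _ hnpos
    have hsne : s ≠ n := by
      have h1 : s ∣ a.val := Nat.gcd_dvd_left _ _
      have h2 : a.val < n := a.val_lt
      have := Nat.le_of_dvd (Nat.pos_of_ne_zero haval) h1
      omega
    -- card of fiber ≤ n / s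
    have hcard : (A.filter fun b => G b = s).card ≤ n / s := by
      refine le_trans (Finset.card_le_card_of_injOn (t := Finset.range (n / s))
        (fun b : ZMod n => b.val / s) ?_ ?_) (le_of_eq (Finset.card_range _))
      · intro b hb
        simp only [Finset.mem_coe, Finset.mem_filter] at hb
        have hdvd : s ∣ b.val := by
          rw [← hb.2]; exact Nat.gcd_dvd_left _ _
        simp only [Finset.mem_coe, Finset.mem_range]
        exact Nat.div_lt_div_of_lt_of_dvd hsdvd b.val_lt
      · intro u hu v hv huv
        simp only [Finset.mem_coe, Finset.mem_filter] at hu hv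
        have h1 : s ∣ u.val := by rw [← hu.2]; exact Nat.gcd_dvd_left _ _
        have h2 : s ∣ v.val := by rw [← hv.2]; exact Nat.gcd_dvd_left _ _
        apply ZMod.val_injective
        rw [← Nat.mul_div_cancel' h1, ← Nat.mul_div_cancel' h2]
        exact congrArg (fun q => s * q) huv
    -- s ≤ n / minFac (real)
    have hsle : (s : ℝ) ≤ (n : ℝ) / (n.minFac : ℝ) := by
      have hq : 2 ≤ n / s := by
        have hq1 : n / s ∣ n := Nat.div_dvd_of_dvd hsdvd
        have hq0 : 0 < n / s := Nat.div_pos (Nat.le_of_dvd hnpos hsdvd) hspos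
        have hqne1 : n / s ≠ 1 := by
          intro h
          apply hsne
          have h2 := Nat.div_mul_cancel hsdvd
          rw [h, one_mul] at h2
          omega
        omega
      have hmle : n.minFac ≤ n / s := Nat.minFac_le_of_dvd hq (Nat.div_dvd_of_dvd hsdvd)
      rw [le_div_iff₀ (by exact_mod_cast hminpos)]
      have : s * n.minFac ≤ s * (n / s) := Nat.mul_le_mul_left _ hmle
      rw [Nat.mul_div_cancel' hsdvd] at this
      exact_mod_cast this
    have hcardn : ((A.filter fun b => G b = s).card : ℝ) * (s : ℝ) ≤ (n : ℝ) := by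
      have : ((n / s : ℕ) : ℝ) * (s : ℝ) = ((n / s * s : ℕ) : ℝ) := by push_cast; ring
      calc ((A.filter fun b => G b = s).card : ℝ) * (s : ℝ)
          ≤ ((n / s : ℕ) : ℝ) * (s : ℝ) :=
            mul_le_mul_of_nonneg_right (by exact_mod_cast hcard) (by positivity)
        _ = ((n / s * s : ℕ) : ℝ) := this
        _ = (n : ℝ) := by rw [Nat.div_mul_cancel hsdvd]
    calc ((A.filter fun b => G b = s).card : ℝ) * (s : ℝ) ^ d
        = (((A.filter fun b => G b = s).card : ℝ) * (s : ℝ)) * (s : ℝ) ^ (d - 1) := by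
          rw [mul_assoc, ← pow_succ']
          congr 2
          omega
      _ ≤ (n : ℝ) * ((n : ℝ) / (n.minFac : ℝ)) ^ (d - 1) := by
          refine mul_le_mul hcardn (pow_le_pow_left₀ (by positivity) hsle _) (by positivity)
            (by positivity)
  calc ∑ a ∈ A, (Nat.gcd a.val n : ℝ) ^ d
      = ∑ s ∈ A.image G, ((A.filter fun a => G a = s).card : ℝ) * (s : ℝ) ^ d := by
        rw [Finset.sum_comp (fun s : ℕ => (s : ℝ) ^ d) G]
        exact Finset.sum_congr rfl fun s _ => by rw [nsmul_eq_mul]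
    _ ≤ ∑ _s ∈ A.image G, (n : ℝ) * ((n : ℝ) / (n.minFac : ℝ)) ^ (d - 1) :=
        Finset.sum_le_sum key
    _ = ((A.image G).card : ℝ) * ((n : ℝ) * ((n : ℝ) / (n.minFac : ℝ)) ^ (d - 1)) := by
        rw [Finset.sum_const, nsmul_eq_mul]
    _ ≤ (n.divisors.card : ℝ) * ((n : ℝ) * ((n : ℝ) / (n.minFac : ℝ)) ^ (d - 1)) := by
        refine mul_le_mul_of_nonneg_right ?_ (by positivity)
        exact_mod_cast Finset.card_le_card himg
    _ = (n.divisors.card : ℝ) * n * ((n : ℝ) / (n.minFac : ℝ)) ^ (d - 1) := by ring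

end main

lemma sum_piFinset_le {k : ℕ} {β : Type*} [DecidableEq β] [Fintype β] [Nonempty β]
    (S : Finset β) (j : Fin k) (ψ : (Fin k → β) → ℝ) (hψ : ∀ Y, 0 ≤ ψ Y) (B : ℝ)
    (hB : ∀ Z : Fin k → β, ∑ y : β, ψ (Function.update Z j y) ≤ B) :
    ∑ Y ∈ Fintype.piFinset (fun _ : Fin k => S), ψ Y ≤ (S.card : ℝ) ^ (k - 1) * B := by
  classical
  obtain ⟨z₀⟩ := ‹Nonempty β›
  set T := Fintype.piFinset (fun i : Fin k => if i = j then ({z₀} : Finset β) else S) with hT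
  have hTcard : (T.card : ℝ) = (S.card : ℝ) ^ (k - 1) := by
    rw [hT, Fintype.card_piFinset, ← Finset.prod_erase_mul _ _ (Finset.mem_univ j)]
    simp only [if_pos rfl, Finset.card_singleton, mul_one]
    rw [Finset.prod_congr rfl (fun i hi => by rw [if_neg (Finset.mem_erase.mp hi).1]),
      Finset.prod_const, Finset.card_erase_of_mem (Finset.mem_univ j), Finset.card_univ,
      Fintype.card_fin]
    simp
  have hinj : ∀ Y ∈ Fintype.piFinset (fun _ : Fin k => S),
      ∀ Y' ∈ Fintype.piFinset (fun _ : Fin k => S),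
      (fun Y : Fin k → β => (Function.update Y j z₀, Y j)) Y
        = (fun Y : Fin k → β => (Function.update Y j z₀, Y j)) Y' → Y = Y' := by
    intro Y _ Y' _ h
    simp only [Prod.mk.injEq] at h
    funext i
    by_cases hij : i = j
    · subst hij; exact h.2
    · have := congrFun h.1 i
      rwa [Function.update_of_ne hij, Function.update_of_ne hij] at this
  have step1 : ∑ Y ∈ Fintype.piFinset (fun _ : Fin k => S), ψ Y
      = ∑ p ∈ (Fintype.piFinset (fun _ : Fin k => S)).image
          (fun Y => (Function.update Y j z₀, Y j)),
          ψ (Function.update p.1 j p.2) := by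
    rw [Finset.sum_image hinj]
    exact Finset.sum_congr rfl fun Y _ => by
      rw [Function.update_idem, Function.update_eq_self]
  have hsub : (Fintype.piFinset (fun _ : Fin k => S)).image
      (fun Y => (Function.update Y j z₀, Y j)) ⊆ T ×ˢ Finset.univ := by
    intro p hp
    obtain ⟨Y, hY, rfl⟩ := Finset.mem_image.mp hp
    rw [Fintype.mem_piFinset] at hY
    rw [Finset.mem_product]
    refine ⟨?_, Finset.mem_univ _⟩
    rw [hT, Fintype.mem_piFinset]
    intro i
    show Function.update Y j z₀ i ∈ (if i = j then ({z₀} : Finset β) else S)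
    by_cases hij : i = j
    · subst hij; simp
    · rw [Function.update_of_ne hij, if_neg hij]
      exact hY i
  calc ∑ Y ∈ Fintype.piFinset (fun _ : Fin k => S), ψ Y
      = ∑ p ∈ (Fintype.piFinset (fun _ : Fin k => S)).image
          (fun Y => (Function.update Y j z₀, Y j)), ψ (Function.update p.1 j p.2) := step1
    _ ≤ ∑ p ∈ T ×ˢ Finset.univ, ψ (Function.update p.1 j p.2) :=
        Finset.sum_le_sum_of_subset_of_nonneg hsub fun p _ _ => hψ _
    _ = ∑ Z ∈ T, ∑ y : β, ψ (Function.update Z j y) := by rw [Finset.sum_product]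
    _ ≤ ∑ _Z ∈ T, B := Finset.sum_le_sum fun Z _ => hB Z
    _ = (T.card : ℝ) * B := by rw [Finset.sum_const, nsmul_eq_mul]
    _ = (S.card : ℝ) ^ (k - 1) * B := by rw [hTcard]

section main2
variable {n d k : ℕ} [NeZero n]

lemma dot_msum (x : Fin d → ZMod n) (c : Fin k → ZMod n) (Y : Fin k → Fin d → ZMod n) :
    dot x (∑ i, c i • Y i) = ∑ i, c i * dot x (Y i) := by
  simp only [dot, Finset.sum_apply, Pi.smul_apply, smul_eq_mul, Finset.mul_sum]
  rw [Finset.sum_comm]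
  exact Finset.sum_congr rfl fun i _ => Finset.sum_congr rfl fun j _ => by ring

lemma count_eq (E : Finset (Fin d → ZMod n)) (Y : Fin k → Fin d → ZMod n) :
    ∑ t : Fin k → ZMod n, ((E.filter fun x => ∀ i, dot x (Y i) = t i).card : ℂ) ^ 2
      = ∑ x ∈ E, ∑ x' ∈ E, (if ∀ i, dot x (Y i) = dot x' (Y i) then (1 : ℂ) else 0) := by
  classical
  have h1 : ∀ t : Fin k → ZMod n, ((E.filter fun x => ∀ i, dot x (Y i) = t i).card : ℂ)
      = ∑ x ∈ E, if ∀ i, dot x (Y i) = t i then (1 : ℂ) else 0 := fun t =>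
    (Finset.sum_boole _ _).symm
  calc ∑ t : Fin k → ZMod n, ((E.filter fun x => ∀ i, dot x (Y i) = t i).card : ℂ) ^ 2
      = ∑ t : Fin k → ZMod n, ∑ x ∈ E, ∑ x' ∈ E,
          (if (∀ i, dot x (Y i) = t i) ∧ (∀ i, dot x' (Y i) = t i) then (1 : ℂ) else 0) := by
        refine Finset.sum_congr rfl fun t _ => ?_
        rw [sq, h1 t, Finset.sum_mul_sum]
        refine Finset.sum_congr rfl fun x _ => Finset.sum_congr rfl fun x' _ => ?_
        by_cases hx : ∀ i, dot x (Y i) = t i <;> by_cases hx' : ∀ i, dot x' (Y i) = t i <;>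
          simp [hx, hx']
    _ = ∑ x ∈ E, ∑ x' ∈ E, ∑ t : Fin k → ZMod n,
          (if (∀ i, dot x (Y i) = t i) ∧ (∀ i, dot x' (Y i) = t i) then (1 : ℂ) else 0) := by
        rw [Finset.sum_comm]
        exact Finset.sum_congr rfl fun x _ => Finset.sum_comm
    _ = ∑ x ∈ E, ∑ x' ∈ E, (if ∀ i, dot x (Y i) = dot x' (Y i) then (1 : ℂ) else 0) := by
        refine Finset.sum_congr rfl fun x _ => Finset.sum_congr rfl fun x' _ => ?_
        by_cases hxx' : ∀ i, dot x (Y i) = dot x' (Y i)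
        · rw [if_pos hxx']
          have hcond : ∀ t : Fin k → ZMod n,
              ((∀ i, dot x (Y i) = t i) ∧ (∀ i, dot x' (Y i) = t i))
                ↔ ((fun i => dot x (Y i)) = t) := by
            intro t
            constructor
            · intro h; funext i; exact h.1 i
            · intro h
              constructor
              · intro i; exact congrFun h i
              · intro i; rw [← hxx' i]; exact congrFun h i
          rw [Finset.sum_congr rfl fun t _ => if_congr (hcond t) rfl rfl]
          rw [Finset.sum_ite_eq Finset.univ (fun i => dot x (Y i)) (fun _ => (1 : ℂ))]
          simp
        · rw [if_neg hxx']
          refine Finset.sum_eq_zero fun t _ => ?_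
          refine if_neg fun h => hxx' fun i => (h.1 i).trans (h.2 i).symm

lemma char_eq (E : Finset (Fin d → ZMod n)) (Y : Fin k → Fin d → ZMod n) :
    ∑ c : Fin k → ZMod n,
        Ff n d E (∑ i, c i • Y i) * (starRingEnd ℂ) (Ff n d E (∑ i, c i • Y i))
      = (n : ℂ) ^ k *
        ∑ x ∈ E, ∑ x' ∈ E, (if ∀ i, dot x (Y i) = dot x' (Y i) then (1 : ℂ) else 0) := by
  classical
  have expand : ∀ c : Fin k → ZMod n,
      Ff n d E (∑ i, c i • Y i) * (starRingEnd ℂ) (Ff n d E (∑ i, c i • Y i))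
        = ∑ x ∈ E, ∑ x' ∈ E, ∏ i, chi n (c i * (dot x (Y i) - dot x' (Y i))) := by
    intro c
    rw [Ff, map_sum, Finset.sum_mul_sum]
    refine Finset.sum_congr rfl fun x _ => Finset.sum_congr rfl fun x' _ => ?_
    rw [chi_conj, ← chi_add, dot_msum, dot_msum, ← sub_eq_add_neg, ← Finset.sum_sub_distrib,
      chi_sum]
    exact Finset.prod_congr rfl fun i _ => by rw [mul_sub]
  rw [Fintype.sum_congr _ _ expand, Finset.sum_comm, Finset.mul_sum]
  refine Finset.sum_congr rfl fun x _ => ?_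
  rw [Finset.sum_comm, Finset.mul_sum]
  refine Finset.sum_congr rfl fun x' _ => ?_
  rw [chi_orth_pi (fun i => dot x (Y i) - dot x' (Y i)), Fintype.card_fin]
  have hcond : (∀ i, dot x (Y i) - dot x' (Y i) = 0) ↔ (∀ i, dot x (Y i) = dot x' (Y i)) :=
    forall_congr' fun i => sub_eq_zero
  by_cases hx : ∀ i, dot x (Y i) = dot x' (Y i)
  · rw [if_pos (hcond.mpr hx), if_pos hx, mul_one]
  · rw [if_neg (fun h => hx (hcond.mp h)), if_neg hx, mul_zero]

end main2

section main3
variable {n d k : ℕ} [NeZero n]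

lemma parseval_real (E : Finset (Fin d → ZMod n)) :
    ∑ m : Fin d → ZMod n, Complex.normSq (Ff n d E m) = (n : ℝ) ^ d * E.card := by
  have h := parseval E
  have h2 : ((∑ m : Fin d → ZMod n, Complex.normSq (Ff n d E m) : ℝ) : ℂ)
      = (((n : ℝ) ^ d * E.card : ℝ) : ℂ) := by
    push_cast
    rw [← h]
    exact Finset.sum_congr rfl fun m _ => (Complex.mul_conj _).symm
  exact_mod_cast h2

lemma perY (E : Finset (Fin d → ZMod n)) (Y : Fin k → Fin d → ZMod n) :
    ∑ c : Fin k → ZMod n, Complex.normSq (Ff n d E (∑ i, c i • Y i))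
      = (n : ℝ) ^ k * ∑ t : Fin k → ZMod n,
          ((E.filter fun x => ∀ i, dot x (Y i) = t i).card : ℝ) ^ 2 := by
  classical
  have h : ∑ c : Fin k → ZMod n,
      Ff n d E (∑ i, c i • Y i) * (starRingEnd ℂ) (Ff n d E (∑ i, c i • Y i))
      = (n : ℂ) ^ k * ∑ t : Fin k → ZMod n,
          ((E.filter fun x => ∀ i, dot x (Y i) = t i).card : ℂ) ^ 2 := by
    rw [char_eq, ← count_eq]
  have h2 : ((∑ c : Fin k → ZMod n, Complex.normSq (Ff n d E (∑ i, c i • Y i)) : ℝ) : ℂ)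
      = (((n : ℝ) ^ k * ∑ t : Fin k → ZMod n,
          ((E.filter fun x => ∀ i, dot x (Y i) = t i).card : ℝ) ^ 2 : ℝ) : ℂ) := by
    push_cast
    rw [← h]
    exact Finset.sum_congr rfl fun c _ => (Complex.mul_conj _).symm
  exact_mod_cast h2

lemma sum_eval_coord (j : Fin k) (h : ZMod n → ℝ) :
    ∑ c : Fin k → ZMod n, h (c j) = (n : ℝ) ^ (k - 1) * ∑ a : ZMod n, h a := by
  classical
  have h1 : ∀ c : Fin k → ZMod n, h (c j) = ∏ i, (if i = j then h (c i) else 1) := by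
    intro c
    rw [← Finset.prod_erase_mul _ _ (Finset.mem_univ j), if_pos rfl,
      Finset.prod_congr rfl (fun i hi => if_neg (Finset.mem_erase.mp hi).1),
      Finset.prod_const_one, one_mul]
  rw [Fintype.sum_congr _ _ h1]
  have h2 : ∑ c : Fin k → ZMod n, ∏ i, (if i = j then h (c i) else 1)
      = ∏ i, ∑ u : ZMod n, (if i = j then h u else 1) := by
    rw [← Finset.sum_prod_piFinset Finset.univ (fun i u => if i = j then h u else 1),
      Fintype.piFinset_univ]
  have h3 : ∀ i ∈ Finset.univ.erase j, (∑ u : ZMod n, (if i = j then h u else 1)) = (n : ℝ) := by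
    intro i hi
    rw [Finset.sum_congr rfl fun u _ => if_neg (Finset.mem_erase.mp hi).1, Finset.sum_const,
      Finset.card_univ, ZMod.card, nsmul_eq_mul, mul_one]
  have h4 : (∑ u : ZMod n, (if j = j then h u else 1)) = ∑ u : ZMod n, h u :=
    Finset.sum_congr rfl fun u _ => if_pos rfl
  rw [h2, ← Finset.prod_erase_mul _ _ (Finset.mem_univ j), Finset.prod_congr rfl h3, h4,
    Finset.prod_const, Finset.card_erase_of_mem (Finset.mem_univ j), Finset.card_univ,
    Fintype.card_fin]

end main3

theorem stmt17 (k : ℕ) (hk : 1 ≤ k) :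
    ∃ C > (0 : ℝ), ∀ (n d : ℕ) [NeZero n], Odd n → 3 ≤ n → 1 ≤ d →
      ∀ E : Finset (Fin d → ZMod n),
      ∑ y ∈ Fintype.piFinset (fun _ : Fin k => E), ∑ t : Fin k → ZMod n,
        ((E.filter (fun x => ∀ i, dot x (y i) = t i)).card : ℝ) ^ 2
        ≤ C * ((E.card : ℝ) ^ (k + 2) / (n : ℝ) ^ k +
          (n.divisors.card : ℝ) * (n : ℝ) ^ (2 * d - 1) * (E.card : ℝ) ^ k /
            (n.minFac : ℝ) ^ (d - 1)) := by
  refine ⟨(k : ℝ), by exact_mod_cast Nat.lt_of_lt_of_le Nat.zero_lt_one hk, ?_⟩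
  intro n d _ hodd hn3 hd E
  classical
  have hn2 : 2 ≤ n := by omega
  have hNpos : (0 : ℝ) < (n : ℝ) := by exact_mod_cast (by omega : 0 < n)
  have hNk : (0 : ℝ) < (n : ℝ) ^ k := by positivity
  have hG : (0 : ℝ) < (n.minFac : ℝ) := by exact_mod_cast Nat.minFac_pos n
  set Ec := (E.card : ℝ) with hEcdef
  have hEc : 0 ≤ Ec := Nat.cast_nonneg _
  set τ := (n.divisors.card : ℝ) with hτdef
  have hτ : 0 ≤ τ := Nat.cast_nonneg _
  set piF := Fintype.piFinset (fun _ : Fin k => E) with hpiF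
  set L := ∑ y ∈ piF, ∑ t : Fin k → ZMod n,
      ((E.filter (fun x => ∀ i, dot x (y i) = t i)).card : ℝ) ^ 2 with hL
  -- master identity
  have key : (n : ℝ) ^ k * L
      = ∑ Y ∈ piF, ∑ c : Fin k → ZMod n, Complex.normSq (Ff n d E (∑ i, c i • Y i)) := by
    rw [hL, Finset.mul_sum]
    exact Finset.sum_congr rfl fun Y _ => (perY E Y).symm
  have hFzero : Ff n d E (0 : Fin d → ZMod n) = (E.card : ℂ) := by
    rw [Ff]
    have h1 : ∀ x ∈ E, chi n (dot x (0 : Fin d → ZMod n)) = 1 := by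
      intro x _
      have hdot : dot x (0 : Fin d → ZMod n) = 0 := by simp [dot]
      rw [hdot, chi_eq]
      exact AddChar.map_zero_eq_one _
    rw [Finset.sum_congr rfl h1, Finset.sum_const, nsmul_eq_mul, mul_one]
  have split : ∑ Y ∈ piF, ∑ c : Fin k → ZMod n, Complex.normSq (Ff n d E (∑ i, c i • Y i))
      = (∑ _Y ∈ piF, Ec ^ 2) + ∑ c ∈ Finset.univ.erase (0 : Fin k → ZMod n),
          ∑ Y ∈ piF, Complex.normSq (Ff n d E (∑ i, c i • Y i)) := by
    have h1 : ∀ Y ∈ piF, ∑ c : Fin k → ZMod n, Complex.normSq (Ff n d E (∑ i, c i • Y i))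
        = Ec ^ 2 + ∑ c ∈ Finset.univ.erase (0 : Fin k → ZMod n),
            Complex.normSq (Ff n d E (∑ i, c i • Y i)) := by
      intro Y _
      rw [← Finset.add_sum_erase Finset.univ _ (Finset.mem_univ (0 : Fin k → ZMod n))]
      congr 1
      have hz : (∑ i, (0 : Fin k → ZMod n) i • Y i) = (0 : Fin d → ZMod n) := by simp
      rw [hz, hFzero, ← Complex.ofReal_natCast, Complex.normSq_ofReal, sq, hEcdef]
    rw [Finset.sum_congr rfl h1, Finset.sum_add_distrib]
    congr 1
    exact Finset.sum_comm
  have main1 : (∑ _Y ∈ piF, Ec ^ 2) = Ec ^ k * Ec ^ 2 := by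
    rw [Finset.sum_const, nsmul_eq_mul, hpiF, Fintype.card_piFinset, Finset.prod_const,
      Finset.card_univ, Fintype.card_fin]
    push_cast
    rw [hEcdef]
  -- per-c error bound
  have errb : ∀ c ∈ Finset.univ.erase (0 : Fin k → ZMod n),
      ∑ Y ∈ piF, Complex.normSq (Ff n d E (∑ i, c i • Y i))
        ≤ ∑ j : Fin k, (if c j ≠ 0 then
            Ec ^ (k - 1) * ((Nat.gcd (c j).val n : ℝ) ^ d * ((n : ℝ) ^ d * Ec)) else 0) := by
    intro c hc
    have hcne : c ≠ 0 := (Finset.mem_erase.mp hc).1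
    obtain ⟨j, hj⟩ : ∃ j, c j ≠ 0 := by
      by_contra hcon; push_neg at hcon; exact hcne (funext hcon)
    have hstep : ∑ Y ∈ piF, Complex.normSq (Ff n d E (∑ i, c i • Y i))
        ≤ Ec ^ (k - 1) * ((Nat.gcd (c j).val n : ℝ) ^ d * ((n : ℝ) ^ d * Ec)) := by
      rw [hpiF]
      have := sum_piFinset_le E j
        (fun Y => Complex.normSq (Ff n d E (∑ i, c i • Y i)))
        (fun Y => Complex.normSq_nonneg _)
        ((Nat.gcd (c j).val n : ℝ) ^ d * ((n : ℝ) ^ d * Ec)) ?_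
      · exact this
      · intro Z
        have hupd : ∀ y : Fin d → ZMod n, (∑ i, c i • Function.update Z j y i)
            = c j • y + ∑ i ∈ Finset.univ.erase j, c i • Z i := by
          intro y
          rw [← Finset.add_sum_erase Finset.univ (fun i => c i • Function.update Z j y i)
            (Finset.mem_univ j)]
          congr 1
          · rw [Function.update_self]
          · exact Finset.sum_congr rfl fun i hi => by
              rw [Function.update_of_ne (Finset.mem_erase.mp hi).1]
        calc ∑ y : Fin d → ZMod n,
            Complex.normSq (Ff n d E (∑ i, c i • Function.update Z j y i))
            = ∑ y : Fin d → ZMod n, Complex.normSq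
                (Ff n d E (c j • y + ∑ i ∈ Finset.univ.erase j, c i • Z i)) :=
              Finset.sum_congr rfl fun y _ => by rw [hupd y]
          _ ≤ (Nat.gcd (c j).val n : ℝ) ^ d
                * ∑ m : Fin d → ZMod n, Complex.normSq (Ff n d E m) :=
              sum_shift_le (c j) _ _ (fun m => Complex.normSq_nonneg _)
          _ = (Nat.gcd (c j).val n : ℝ) ^ d * ((n : ℝ) ^ d * Ec) := by rw [parseval_real]
    refine hstep.trans ?_
    have := Finset.single_le_sum (f := fun j' : Fin k => if c j' ≠ 0 then
        Ec ^ (k - 1) * ((Nat.gcd (c j').val n : ℝ) ^ d * ((n : ℝ) ^ d * Ec)) else 0)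
      (fun j' _ => by split_ifs <;> positivity) (Finset.mem_univ j)
    rwa [if_pos hj] at this
  -- sum the error over c
  have innerb : ∑ a ∈ Finset.univ.erase (0 : ZMod n),
      Ec ^ (k - 1) * ((Nat.gcd a.val n : ℝ) ^ d * ((n : ℝ) ^ d * Ec))
        ≤ (Ec ^ (k - 1) * ((n : ℝ) ^ d * Ec)) *
            (τ * n * ((n : ℝ) / (n.minFac : ℝ)) ^ (d - 1)) := by
    have h1 : ∑ a ∈ Finset.univ.erase (0 : ZMod n),
        Ec ^ (k - 1) * ((Nat.gcd a.val n : ℝ) ^ d * ((n : ℝ) ^ d * Ec))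
        = (Ec ^ (k - 1) * ((n : ℝ) ^ d * Ec)) *
            ∑ a ∈ Finset.univ.erase (0 : ZMod n), (Nat.gcd a.val n : ℝ) ^ d := by
      rw [Finset.mul_sum]
      exact Finset.sum_congr rfl fun a _ => by ring
    rw [h1]
    refine mul_le_mul_of_nonneg_left ?_ (by positivity)
    have := sum_gcd_pow_le (n := n) (d := d) hd hn2
    calc ∑ a ∈ Finset.univ.erase (0 : ZMod n), (Nat.gcd a.val n : ℝ) ^ d
        ≤ (n.divisors.card : ℝ) * n * ((n : ℝ) / (n.minFac : ℝ)) ^ (d - 1) := this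
      _ = τ * n * ((n : ℝ) / (n.minFac : ℝ)) ^ (d - 1) := by rw [hτdef]
  have err2 : ∑ c ∈ Finset.univ.erase (0 : Fin k → ZMod n),
      ∑ Y ∈ piF, Complex.normSq (Ff n d E (∑ i, c i • Y i))
        ≤ (k : ℝ) * ((n : ℝ) ^ (k - 1) * ((Ec ^ (k - 1) * ((n : ℝ) ^ d * Ec)) *
            (τ * n * ((n : ℝ) / (n.minFac : ℝ)) ^ (d - 1)))) := by
    calc ∑ c ∈ Finset.univ.erase (0 : Fin k → ZMod n),
        ∑ Y ∈ piF, Complex.normSq (Ff n d E (∑ i, c i • Y i))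
        ≤ ∑ c ∈ Finset.univ.erase (0 : Fin k → ZMod n), ∑ j : Fin k, (if c j ≠ 0 then
            Ec ^ (k - 1) * ((Nat.gcd (c j).val n : ℝ) ^ d * ((n : ℝ) ^ d * Ec)) else 0) :=
          Finset.sum_le_sum errb
      _ ≤ ∑ c : Fin k → ZMod n, ∑ j : Fin k, (if c j ≠ 0 then
            Ec ^ (k - 1) * ((Nat.gcd (c j).val n : ℝ) ^ d * ((n : ℝ) ^ d * Ec)) else 0) := by
          refine Finset.sum_le_sum_of_subset_of_nonneg
            (Finset.erase_subset _ _) fun c _ _ => ?_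
          refine Finset.sum_nonneg fun j _ => ?_
          split_ifs <;> positivity
      _ = ∑ j : Fin k, ∑ c : Fin k → ZMod n, (if c j ≠ 0 then
            Ec ^ (k - 1) * ((Nat.gcd (c j).val n : ℝ) ^ d * ((n : ℝ) ^ d * Ec)) else 0) :=
          Finset.sum_comm
      _ = ∑ _j : Fin k, (n : ℝ) ^ (k - 1) * ∑ a : ZMod n, (if a ≠ 0 then
            Ec ^ (k - 1) * ((Nat.gcd a.val n : ℝ) ^ d * ((n : ℝ) ^ d * Ec)) else 0) :=
          Finset.sum_congr rfl fun j _ => sum_eval_coord j (fun a => if a ≠ 0 then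
            Ec ^ (k - 1) * ((Nat.gcd a.val n : ℝ) ^ d * ((n : ℝ) ^ d * Ec)) else 0)
      _ ≤ ∑ _j : Fin k, (n : ℝ) ^ (k - 1) * ((Ec ^ (k - 1) * ((n : ℝ) ^ d * Ec)) *
            (τ * n * ((n : ℝ) / (n.minFac : ℝ)) ^ (d - 1))) := by
          refine Finset.sum_le_sum fun j _ => ?_
          refine mul_le_mul_of_nonneg_left ?_ (by positivity)
          have heq : ∑ a : ZMod n, (if a ≠ 0 then
              Ec ^ (k - 1) * ((Nat.gcd a.val n : ℝ) ^ d * ((n : ℝ) ^ d * Ec)) else 0)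
              = ∑ a ∈ Finset.univ.erase (0 : ZMod n),
                  Ec ^ (k - 1) * ((Nat.gcd a.val n : ℝ) ^ d * ((n : ℝ) ^ d * Ec)) := by
            rw [← Finset.sum_filter, Finset.filter_ne']
          rw [heq]
          exact innerb
      _ = (k : ℝ) * ((n : ℝ) ^ (k - 1) * ((Ec ^ (k - 1) * ((n : ℝ) ^ d * Ec)) *
            (τ * n * ((n : ℝ) / (n.minFac : ℝ)) ^ (d - 1)))) := by
          rw [Finset.sum_const, nsmul_eq_mul, Finset.card_univ, Fintype.card_fin]
  -- combine
  have total : (n : ℝ) ^ k * L ≤ Ec ^ (k + 2)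
      + (k : ℝ) * ((n : ℝ) ^ (k - 1) * ((Ec ^ (k - 1) * ((n : ℝ) ^ d * Ec)) *
          (τ * n * ((n : ℝ) / (n.minFac : ℝ)) ^ (d - 1)))) := by
    rw [key, split, main1]
    have : Ec ^ k * Ec ^ 2 = Ec ^ (k + 2) := by rw [← pow_add]
    rw [this]
    exact add_le_add_right err2 _
  have herr_eq : (k : ℝ) * ((n : ℝ) ^ (k - 1) * ((Ec ^ (k - 1) * ((n : ℝ) ^ d * Ec)) *
        (τ * n * ((n : ℝ) / (n.minFac : ℝ)) ^ (d - 1))))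
      = ((k : ℝ) * (τ * (n : ℝ) ^ (2 * d - 1) * Ec ^ k / (n.minFac : ℝ) ^ (d - 1)))
          * (n : ℝ) ^ k := by
    obtain ⟨κ, rfl⟩ : ∃ κ, k = κ + 1 := ⟨k - 1, by omega⟩
    obtain ⟨e, rfl⟩ : ∃ e, d = e + 1 := ⟨d - 1, by omega⟩
    have h1 : κ + 1 - 1 = κ := by omega
    have h2 : e + 1 - 1 = e := by omega
    have h3 : 2 * (e + 1) - 1 = 2 * e + 1 := by omega
    rw [h1, h2, h3]
    rw [div_pow]
    field_simp
    ring
  have hL2 : L ≤ (Ec ^ (k + 2)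
      + ((k : ℝ) * (τ * (n : ℝ) ^ (2 * d - 1) * Ec ^ k / (n.minFac : ℝ) ^ (d - 1)))
          * (n : ℝ) ^ k) / (n : ℝ) ^ k := by
    rw [le_div_iff₀ hNk, mul_comm]
    rw [herr_eq] at total
    exact total
  refine hL2.trans ?_
  rw [add_div, mul_div_cancel_right₀ _ hNk.ne']
  have hk1 : (1 : ℝ) ≤ (k : ℝ) := by exact_mod_cast hk
  have hA : 0 ≤ Ec ^ (k + 2) / (n : ℝ) ^ k := by positivity
  calc Ec ^ (k + 2) / (n : ℝ) ^ k
        + (k : ℝ) * (τ * (n : ℝ) ^ (2 * d - 1) * Ec ^ k / (n.minFac : ℝ) ^ (d - 1))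
      ≤ (k : ℝ) * (Ec ^ (k + 2) / (n : ℝ) ^ k)
        + (k : ℝ) * (τ * (n : ℝ) ^ (2 * d - 1) * Ec ^ k / (n.minFac : ℝ) ^ (d - 1)) := by
        refine add_le_add_left (le_mul_of_one_le_left hA hk1) _
    _ = (k : ℝ) * (Ec ^ (k + 2) / (n : ℝ) ^ k
        + τ * (n : ℝ) ^ (2 * d - 1) * Ec ^ k / (n.minFac : ℝ) ^ (d - 1)) := by ring
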